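/- arXiv:2309.09148 — 5 statements merged into one kernel-verified Lean document; each statement's English description precedes it below -/
import Mathlib

section
/- Soundness of the RG-BasicEvt rule: assume ⊥ has no program transitions and every program transition changes the program component. If for every (l,g,P) ∈ ev the program-level validity Σ ⊨p P sat [pre ∩ g, rely, guar, post] holds, stable(pre, rely) holds, and Id ⊆ guar, then the basic event is valid: Σ ⊨ Event(ev) sat [pre, rely, guar, post]. -/
namespace PiCore

/-- Event systems of the PiCore event specification language. -/
inductive EventSys (Lbl Prog St : Type) : Type where
  | basic (ev : Set (Lbl × Set St × Prog))
  | atom (ev : Set (Lbl × Set St × Prog))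
  | trig (P : Prog)
  | seq (S1 S2 : EventSys Lbl Prog St)
  | choice (S1 S2 : EventSys Lbl Prog St)
  | join (S1 S2 : EventSys Lbl Prog St)
  | iter (b : Set St) (S : EventSys Lbl Prog St)

/-- Transition kinds of event systems: anonymous τ, event entry, atomic event entry. -/
inductive TranKind (Lbl : Type) : Type where
  | tau
  | evt (l : Lbl)
  | aevt (l : Lbl)

variable {Lbl Prog St Env : Type} (K : Type)
variable (ptran : Env → Prog × St → Prog × St → Prop) (bot : Prog)

/-- Labelled small-step semantics of event systems. -/
inductive esStep (Γ : Env) :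
    EventSys Lbl Prog St × St → TranKind Lbl × K → EventSys Lbl Prog St × St → Prop where
  | basicEvt {ev : Set (Lbl × Set St × Prog)} {l g P s κ}
      (h1 : (l, g, P) ∈ ev) (h2 : s ∈ g) :
      esStep Γ (.basic ev, s) (.evt l, κ) (.trig P, s)
  | atomEvt {ev : Set (Lbl × Set St × Prog)} {l g P s t κ}
      (h1 : (l, g, P) ∈ ev) (h2 : s ∈ g)
      (h3 : Relation.ReflTransGen (fun c c' => ptran Γ c c') (P, s) (bot, t)) :
      esStep Γ (.atom ev, s) (.aevt l, κ) (.trig bot, t)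
  | trigEvt {P Q s t κ} (h : ptran Γ (P, s) (Q, t)) :
      esStep Γ (.trig P, s) (.tau, κ) (.trig Q, t)
  | seqStep {S1 S1' S2 s t} {δ : TranKind Lbl × K}
      (h : esStep Γ (S1, s) δ (S1', t)) (hne : S1' ≠ .trig bot) :
      esStep Γ (.seq S1 S2, s) δ (.seq S1' S2, t)
  | seqFin {S1 S2 s t} {δ : TranKind Lbl × K}
      (h : esStep Γ (S1, s) δ (.trig bot, t)) :
      esStep Γ (.seq S1 S2, s) δ (S2, t)
  | choice1 {S1 S2 S1' s t} {δ : TranKind Lbl × K}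
      (h : esStep Γ (S1, s) δ (S1', t)) :
      esStep Γ (.choice S1 S2, s) δ (S1', t)
  | choice2 {S1 S2 S2' s t} {δ : TranKind Lbl × K}
      (h : esStep Γ (S2, s) δ (S2', t)) :
      esStep Γ (.choice S1 S2, s) δ (S2', t)
  | join1 {S1 S2 S1' s t} {δ : TranKind Lbl × K}
      (h : esStep Γ (S1, s) δ (S1', t)) :
      esStep Γ (.join S1 S2, s) δ (.join S1' S2, t)
  | join2 {S1 S2 S2' s t} {δ : TranKind Lbl × K}
      (h : esStep Γ (S2, s) δ (S2', t)) :
      esStep Γ (.join S1 S2, s) δ (.join S1 S2', t)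
  | joinFin {s κ} :
      esStep Γ (.join (.trig bot) (.trig bot), s) (.tau, κ) (.trig bot, s)
  | iterT {b S s κ} (h : s ∈ b) (hne : S ≠ .trig bot) :
      esStep Γ (.iter b S, s) (.tau, κ) (.seq S (.iter b S), s)
  | iterF {b S s κ} (h : s ∉ b) :
      esStep Γ (.iter b S, s) (.tau, κ) (.trig bot, s)

/-- Linear computations of event systems. -/
inductive cpts (Γ : Env) : List (EventSys Lbl Prog St × St) → Prop where
  | one {S s} : cpts Γ [(S, s)]
  | env {S s t cs} (h : cpts Γ ((S, t) :: cs)) : cpts Γ ((S, s) :: (S, t) :: cs)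
  | act {S1 S2 s t cs} {δ : TranKind Lbl × K}
      (h1 : esStep K ptran bot Γ (S1, s) δ (S2, t))
      (h2 : cpts Γ ((S2, t) :: cs)) : cpts Γ ((S1, s) :: (S2, t) :: cs)

/-- Sequential lifting of a computation. -/
def liftSeq (Q : EventSys Lbl Prog St) (c : List (EventSys Lbl Prog St × St)) :
    List (EventSys Lbl Prog St × St) :=
  c.map fun p => (.seq p.1 Q, p.2)

/-- Modular computations of event systems. -/
inductive cptsM (Γ : Env) : List (EventSys Lbl Prog St × St) → Prop where
  | one {S s} : cptsM Γ [(S, s)]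
  | env {S s t cs} (h : cptsM Γ ((S, t) :: cs)) : cptsM Γ ((S, s) :: (S, t) :: cs)
  | trigEvt {P Q s t cs} (h : ptran Γ (P, s) (Q, t))
      (h2 : cptsM Γ ((.trig Q, t) :: cs)) :
      cptsM Γ ((.trig P, s) :: (.trig Q, t) :: cs)
  | basicEvt {ev : Set (Lbl × Set St × Prog)} {l g P s cs}
      (h1 : (l, g, P) ∈ ev) (h2 : s ∈ g)
      (h3 : cptsM Γ ((.trig P, s) :: cs)) :
      cptsM Γ ((.basic ev, s) :: (.trig P, s) :: cs)
  | atomEvt {ev : Set (Lbl × Set St × Prog)} {l g P s t cs}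
      (h1 : (l, g, P) ∈ ev) (h2 : s ∈ g)
      (h3 : Relation.ReflTransGen (fun c c' => ptran Γ c c') (P, s) (bot, t))
      (h4 : cptsM Γ ((.trig bot, t) :: cs)) :
      cptsM Γ ((.atom ev, s) :: (.trig bot, t) :: cs)
  | seqStep {S1 S1' S2 s t cs} {δ : TranKind Lbl × K}
      (h : esStep K ptran bot Γ (S1, s) δ (S1', t)) (hne : S1' ≠ .trig bot)
      (h2 : cptsM Γ ((.seq S1' S2, t) :: cs)) :
      cptsM Γ ((.seq S1 S2, s) :: (.seq S1' S2, t) :: cs)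
  | seqFin {S1 S2 s t cs} {δ : TranKind Lbl × K}
      (h : esStep K ptran bot Γ (S1, s) δ (.trig bot, t))
      (h2 : cptsM Γ ((S2, t) :: cs)) :
      cptsM Γ ((.seq S1 S2, s) :: (S2, t) :: cs)
  | chc1 {S1 S2 S1' s t cs} {δ : TranKind Lbl × K}
      (h : esStep K ptran bot Γ (S1, s) δ (S1', t))
      (h2 : cptsM Γ ((S1', t) :: cs)) :
      cptsM Γ ((.choice S1 S2, s) :: (S1', t) :: cs)
  | chc2 {S1 S2 S2' s t cs} {δ : TranKind Lbl × K}
      (h : esStep K ptran bot Γ (S2, s) δ (S2', t))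
      (h2 : cptsM Γ ((S2', t) :: cs)) :
      cptsM Γ ((.choice S1 S2, s) :: (S2', t) :: cs)
  | join1 {S1 S2 S1' s t cs} {δ : TranKind Lbl × K}
      (h : esStep K ptran bot Γ (S1, s) δ (S1', t))
      (h2 : cptsM Γ ((.join S1' S2, t) :: cs)) :
      cptsM Γ ((.join S1 S2, s) :: (.join S1' S2, t) :: cs)
  | join2 {S1 S2 S2' s t cs} {δ : TranKind Lbl × K}
      (h : esStep K ptran bot Γ (S2, s) δ (S2', t))
      (h2 : cptsM Γ ((.join S1 S2', t) :: cs)) :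
      cptsM Γ ((.join S1 S2, s) :: (.join S1 S2', t) :: cs)
  | joinFin {s cs} (h : cptsM Γ ((.trig bot, s) :: cs)) :
      cptsM Γ ((.join (.trig bot) (.trig bot), s) :: (.trig bot, s) :: cs)
  | iterF {b S s cs} (h : s ∉ b) (h2 : cptsM Γ ((.trig bot, s) :: cs)) :
      cptsM Γ ((.iter b S, s) :: (.trig bot, s) :: cs)
  | iterTOne {b S s cs} (h : s ∈ b) (h2 : cptsM Γ ((S, s) :: cs)) :
      cptsM Γ ((.iter b S, s) :: liftSeq (.iter b S) ((S, s) :: cs))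
  | iterTMore {b S s t cs cs'} {δ : TranKind Lbl × K}
      (h : s ∈ b) (h2 : cptsM Γ ((S, s) :: cs))
      (h3 : esStep K ptran bot Γ (((S, s) :: cs).getLast (List.cons_ne_nil _ _)) δ
              (.trig bot, t))
      (h4 : cptsM Γ ((.iter b S, t) :: cs')) :
      cptsM Γ ((.iter b S, s) ::
        (liftSeq (.iter b S) ((S, s) :: cs) ++ (.iter b S, t) :: cs'))


section RG

variable (Γ : Env)

/-- The assumption function: the initial state is in `pre` and every environment
step (consecutive configurations with identical event systems) satisfies `rely`. -/
def Assume (pre : Set St) (rely : Set (St × St)) :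
    Set (List (EventSys Lbl Prog St × St)) :=
  {cl | (∀ c ∈ cl.head?, c.2 ∈ pre) ∧
    ∀ i : ℕ, (h : i + 1 < cl.length) →
      (cl.get ⟨i, Nat.lt_of_succ_lt h⟩).1 = (cl.get ⟨i + 1, h⟩).1 →
      ((cl.get ⟨i, Nat.lt_of_succ_lt h⟩).2, (cl.get ⟨i + 1, h⟩).2) ∈ rely}

/-- The commitment function: every component step (consecutive configurations
related by a labelled event-system transition) satisfies `guar`, and the final
state is in `post` whenever the final event system is the terminated event ⟨⊥⟩. -/
def Commit (guar : Set (St × St)) (post : Set St) :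
    Set (List (EventSys Lbl Prog St × St)) :=
  {cl | (∀ i : ℕ, (h : i + 1 < cl.length) →
      (∃ δ : TranKind Lbl × K,
        esStep K ptran bot Γ (cl.get ⟨i, Nat.lt_of_succ_lt h⟩) δ (cl.get ⟨i + 1, h⟩)) →
      ((cl.get ⟨i, Nat.lt_of_succ_lt h⟩).2, (cl.get ⟨i + 1, h⟩).2) ∈ guar) ∧
    (∀ c ∈ cl.getLast?, c.1 = EventSys.trig bot → c.2 ∈ post)}

/-- Computations of an event system `S` starting from the initial state `s`. -/
def cptsFrom (S : EventSys Lbl Prog St) (s : St) :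
    Set (List (EventSys Lbl Prog St × St)) :=
  {cl | cpts K ptran bot Γ cl ∧ cl.head? = some (S, s)}

/-- Validity of a rely-guarantee specification for an event system:
`Σ ⊨ ES sat [pre, rely, guar, post]`. -/
def esValid (S : EventSys Lbl Prog St)
    (pre : Set St) (rely guar : Set (St × St)) (post : Set St) : Prop :=
  ∀ s : St, cptsFrom K ptran bot Γ S s ∩ Assume pre rely ⊆
    Commit K ptran bot Γ guar post

/-- Program computations. -/
inductive pcpts : List (Prog × St) → Prop where
  | one {P s} : pcpts [(P, s)]
  | env {P s t cs} (h : pcpts ((P, t) :: cs)) : pcpts ((P, s) :: (P, t) :: cs)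
  | step {P Q s t cs} (h : ptran Γ (P, s) (Q, t))
      (h2 : pcpts ((Q, t) :: cs)) : pcpts ((P, s) :: (Q, t) :: cs)

/-- The assumption function at the program level. -/
def pAssume (pre : Set St) (rely : Set (St × St)) : Set (List (Prog × St)) :=
  {cl | (∀ c ∈ cl.head?, c.2 ∈ pre) ∧
    ∀ i : ℕ, (h : i + 1 < cl.length) →
      (cl.get ⟨i, Nat.lt_of_succ_lt h⟩).1 = (cl.get ⟨i + 1, h⟩).1 →
      ((cl.get ⟨i, Nat.lt_of_succ_lt h⟩).2, (cl.get ⟨i + 1, h⟩).2) ∈ rely}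

/-- The commitment function at the program level, with termination at ⊥. -/
def pCommit (guar : Set (St × St)) (post : Set St) : Set (List (Prog × St)) :=
  {cl | (∀ i : ℕ, (h : i + 1 < cl.length) →
      ptran Γ (cl.get ⟨i, Nat.lt_of_succ_lt h⟩) (cl.get ⟨i + 1, h⟩) →
      ((cl.get ⟨i, Nat.lt_of_succ_lt h⟩).2, (cl.get ⟨i + 1, h⟩).2) ∈ guar) ∧
    (∀ c ∈ cl.getLast?, c.1 = bot → c.2 ∈ post)}

/-- Program-level validity: `Σ ⊨p P sat [pre, rely, guar, post]`. -/
def pValid (P : Prog) (pre : Set St) (rely guar : Set (St × St)) (post : Set St) :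
    Prop :=
  ∀ s : St,
    {cl : List (Prog × St) | pcpts ptran Γ cl ∧ cl.head? = some (P, s)} ∩
      pAssume pre rely ⊆ pCommit ptran bot Γ guar post

end RG

/-- `stable f g`: the set `f` is stable under the relation `g`. -/
def stable {St : Type} (f : Set St) (g : Set (St × St)) : Prop :=
  ∀ x y : St, x ∈ f → (x, y) ∈ g → y ∈ f

/-- The identity relation on states. -/
def IdRel (St : Type) : Set (St × St) := {p | p.1 = p.2}

end PiCore

/-!
Until it enters an event, a computation of `Event(ev)` stays at `Event(ev)`, so all its steps
are environment steps, and these preserve `pre` because `pre` is stable under `rely`. Entering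
the body `P` of some `(l, g, P) ∈ ev` happens at a state of `pre ∩ g` and leaves the state
unchanged, so it is a `guar` step because `Id ⊆ guar`. From then on the computation is the image
of a program computation of `P` under `(Q, t) ↦ (⟨Q⟩, t)`; as `⟨·⟩` is injective, the image has
exactly the environment steps of the program computation, and the validity of `P` yields the
commitment.
-/

namespace PiCore

open List

theorem isChain_iff_forall_get {α : Type*} {R : α → α → Prop} {l : List α} :
    IsChain R l ↔ ∀ i (h : i + 1 < l.length),
      R (l.get ⟨i, Nat.lt_of_succ_lt h⟩) (l.get ⟨i + 1, h⟩) := by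
  simp only [isChain_iff_getElem, List.get_eq_getElem]

variable {Lbl Prog St Env : Type} {K : Type}
  {ptran : Env → Prog × St → Prog × St → Prop} {bot : Prog} {Γ : Env}
  {pre post : Set St} {rely guar : Set (St × St)}

theorem mem_Assume_iff {cl : List (EventSys Lbl Prog St × St)} :
    cl ∈ Assume pre rely ↔ (∀ c ∈ cl.head?, c.2 ∈ pre) ∧
      IsChain (fun c c' : EventSys Lbl Prog St × St => c.1 = c'.1 → (c.2, c'.2) ∈ rely) cl := by
  rw [isChain_iff_forall_get]; rfl

theorem mem_pAssume_iff {cl : List (Prog × St)} :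
    cl ∈ pAssume pre rely ↔ (∀ c ∈ cl.head?, c.2 ∈ pre) ∧
      IsChain (fun c c' : Prog × St => c.1 = c'.1 → (c.2, c'.2) ∈ rely) cl := by
  rw [isChain_iff_forall_get]; rfl

theorem mem_Commit_iff {cl : List (EventSys Lbl Prog St × St)} :
    cl ∈ Commit K ptran bot Γ guar post ↔
      IsChain (fun c c' => (∃ δ : TranKind Lbl × K, esStep K ptran bot Γ c δ c') →
        (c.2, c'.2) ∈ guar) cl ∧
      ∀ c ∈ cl.getLast?, c.1 = .trig bot → c.2 ∈ post := by
  rw [isChain_iff_forall_get]; rfl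

theorem mem_pCommit_iff {cl : List (Prog × St)} :
    cl ∈ pCommit ptran bot Γ guar post ↔
      IsChain (fun c c' => ptran Γ c c' → (c.2, c'.2) ∈ guar) cl ∧
      ∀ c ∈ cl.getLast?, c.1 = bot → c.2 ∈ post := by
  rw [isChain_iff_forall_get]; rfl

theorem tail_mem_Assume {pre' : Set St} {c c' : EventSys Lbl Prog St × St} {cs}
    (h : c :: c' :: cs ∈ Assume pre rely) (hc' : c'.2 ∈ pre') :
    c' :: cs ∈ Assume pre' rely := by
  obtain ⟨-, hchain⟩ := mem_Assume_iff.mp h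
  exact mem_Assume_iff.mpr ⟨by simpa using hc', (isChain_cons_cons.mp hchain).2⟩

theorem cons_cons_mem_Commit_iff {c c' : EventSys Lbl Prog St × St} {cs} :
    c :: c' :: cs ∈ Commit K ptran bot Γ guar post ↔
      ((∃ δ : TranKind Lbl × K, esStep K ptran bot Γ c δ c') → (c.2, c'.2) ∈ guar) ∧
      c' :: cs ∈ Commit K ptran bot Γ guar post := by
  rw [mem_Commit_iff, mem_Commit_iff, isChain_cons_cons, getLast?_cons_cons, and_assoc]

theorem esStep_basic_inv {ev : Set (Lbl × Set St × Prog)} {s t : St} {δ : TranKind Lbl × K}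
    {S : EventSys Lbl Prog St} (h : esStep K ptran bot Γ (.basic ev, s) δ (S, t)) :
    ∃ l g P, (l, g, P) ∈ ev ∧ s ∈ g ∧ S = .trig P ∧ t = s := by
  cases h with
  | basicEvt h1 h2 => exact ⟨_, _, _, h1, h2, rfl, rfl⟩

theorem esStep_trig_inv {P : Prog} {s t : St} {δ : TranKind Lbl × K}
    {S : EventSys Lbl Prog St} (h : esStep K ptran bot Γ (.trig P, s) δ (S, t)) :
    ∃ Q, S = .trig Q ∧ ptran Γ (P, s) (Q, t) := by
  cases h with
  | trigEvt h => exact ⟨_, rfl, h⟩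

def trigCfg (c : Prog × St) : EventSys Lbl Prog St × St := (.trig c.1, c.2)

theorem ptran_of_esStep_trigCfg {a b : Prog × St} {δ : TranKind Lbl × K}
    (h : esStep K ptran bot Γ (trigCfg a) δ (trigCfg b)) : ptran Γ a b := by
  obtain ⟨Q, hQ, hab⟩ := esStep_trig_inv h
  obtain rfl : b.1 = Q := by simpa using hQ
  exact hab

theorem exists_pcpts_of_cpts_trig {cl : List (EventSys Lbl Prog St × St)}
    (h : cpts K ptran bot Γ cl) :
    ∀ {P s}, cl.head? = some (.trig P, s) →
      ∃ pcs, pcpts ptran Γ ((P, s) :: pcs) ∧ cl = ((P, s) :: pcs).map trigCfg := by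
  induction h with
  | one =>
    intro P s hhead
    obtain ⟨rfl, rfl⟩ := by simpa using hhead
    exact ⟨[], .one, rfl⟩
  | env _ ih =>
    intro P s hhead
    obtain ⟨rfl, rfl⟩ := by simpa using hhead
    obtain ⟨pcs, hpcs, hcs⟩ := ih rfl
    exact ⟨_, .env hpcs, by rw [hcs]; rfl⟩
  | act hstep _ ih =>
    intro P s hhead
    obtain ⟨rfl, rfl⟩ := by simpa using hhead
    obtain ⟨Q, rfl, hPQ⟩ := esStep_trig_inv hstep
    obtain ⟨pcs, hpcs, hcs⟩ := ih rfl
    exact ⟨_, .step hPQ hpcs, by rw [hcs]; rfl⟩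

theorem map_trigCfg_mem_Assume_iff {pcl : List (Prog × St)} :
    pcl.map trigCfg ∈ Assume (Lbl := Lbl) pre rely ↔ pcl ∈ pAssume pre rely := by
  simp only [mem_Assume_iff, mem_pAssume_iff, isChain_map, head?_map, Option.forall_mem_map,
    trigCfg, EventSys.trig.injEq]

theorem map_trigCfg_mem_Commit {pcl : List (Prog × St)}
    (h : pcl ∈ pCommit ptran bot Γ guar post) :
    pcl.map trigCfg ∈ Commit (Lbl := Lbl) K ptran bot Γ guar post := by
  obtain ⟨hguar, hpost⟩ := mem_pCommit_iff.mp h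
  refine mem_Commit_iff.mpr ⟨(isChain_map _).mpr <| hguar.imp fun a b h ⟨_, hab⟩ =>
    h (ptran_of_esStep_trigCfg hab), ?_⟩
  rw [getLast?_map]
  intro c' hc' hbot
  obtain ⟨c, hc, rfl⟩ := Option.mem_map.mp hc'
  exact hpost c hc (by simpa [trigCfg] using hbot)

theorem esValid_trig {P : Prog} (hP : pValid ptran bot Γ P pre rely guar post) :
    esValid K ptran bot Γ (EventSys.trig (Lbl := Lbl) P) pre rely guar post := by
  rintro s cl ⟨⟨hcl, hhead⟩, hA⟩
  obtain ⟨pcs, hpcs, rfl⟩ := exists_pcpts_of_cpts_trig hcl hhead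
  exact map_trigCfg_mem_Commit (hP s ⟨⟨hpcs, rfl⟩, map_trigCfg_mem_Assume_iff.mp hA⟩)

theorem mem_Commit_of_cpts_basic {ev : Set (Lbl × Set St × Prog)}
    (hbody : ∀ l g P, (l, g, P) ∈ ev → pValid ptran bot Γ P (pre ∩ g) rely guar post)
    (hstable : stable pre rely) (hid : IdRel St ⊆ guar)
    {cl : List (EventSys Lbl Prog St × St)} (h : cpts K ptran bot Γ cl) :
    ∀ {s}, cl.head? = some (.basic ev, s) → cl ∈ Assume pre rely →
      cl ∈ Commit K ptran bot Γ guar post := by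
  induction h with
  | one =>
    intro s hhead _
    obtain ⟨rfl, rfl⟩ := by simpa using hhead
    exact mem_Commit_iff.mpr ⟨isChain_singleton _, by simp⟩
  | env _ ih =>
    intro s hhead hA
    obtain ⟨rfl, rfl⟩ := by simpa using hhead
    obtain ⟨hpre, hrely, -⟩ := by simpa [mem_Assume_iff] using hA
    refine cons_cons_mem_Commit_iff.mpr ⟨?_, ih rfl (tail_mem_Assume hA (hstable _ _ hpre hrely))⟩
    rintro ⟨δ, hδ⟩
    obtain ⟨_, _, _, _, _, ⟨⟩, _⟩ := esStep_basic_inv hδ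
  | act hstep hcs _ =>
    intro s hhead hA
    obtain ⟨rfl, rfl⟩ := by simpa using hhead
    obtain ⟨l, g, P, hmem, hg, rfl, rfl⟩ := esStep_basic_inv hstep
    have hpre := (mem_Assume_iff.mp hA).1 _ rfl
    exact cons_cons_mem_Commit_iff.mpr ⟨fun _ => hid rfl,
      esValid_trig (hbody l g P hmem) _ ⟨⟨hcs, rfl⟩, tail_mem_Assume hA ⟨hpre, hg⟩⟩⟩

end PiCore

open PiCore in
theorem rg_basicEvt_sound_general
    {Lbl Prog St Env : Type} (K : Type)
    (ptran : Env → Prog × St → Prog × St → Prop) (bot : Prog)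
    (Γ : Env) (ev : Set (Lbl × Set St × Prog))
    (pre : Set St) (rely guar : Set (St × St)) (post : Set St)
    (hbody : ∀ l g P, (l, g, P) ∈ ev → pValid ptran bot Γ P (pre ∩ g) rely guar post)
    (hstable : stable pre rely)
    (hid : IdRel St ⊆ guar) :
    esValid K ptran bot Γ (EventSys.basic ev) pre rely guar post := by
  rintro s cl ⟨⟨hcl, hhead⟩, hA⟩
  exact mem_Commit_of_cpts_basic hbody hstable hid hcl hhead hA

open PiCore in
/-- **Soundness of the RG-BasicEvt rule.** -/
theorem rg_basicEvt_sound
    {Lbl Prog St Env : Type} (K : Type)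
    (ptran : Env → Prog × St → Prog × St → Prop) (bot : Prog)
    (hbot : ∀ (Γ : Env) (s : St) (c : Prog × St), ¬ ptran Γ (bot, s) c)
    (hneq : ∀ (Γ : Env) (P : Prog) (s t : St), ¬ ptran Γ (P, s) (P, t))
    (Γ : Env) (ev : Set (Lbl × Set St × Prog))
    (pre : Set St) (rely guar : Set (St × St)) (post : Set St)
    (hbody : ∀ l g P, (l, g, P) ∈ ev → pValid ptran bot Γ P (pre ∩ g) rely guar post)
    (hstable : stable pre rely)
    (hid : IdRel St ⊆ guar) :
    esValid K ptran bot Γ (EventSys.basic ev) pre rely guar post :=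
  rg_basicEvt_sound_general K ptran bot Γ ev pre rely guar post hbody hstable hid
end

section
/- Soundness of the RG-AtomEvt rule: assume ⊥ has no program transitions and every program transition changes the program component. If for every (l,g,P) ∈ ev and every state V the program-level validity Σ ⊨p P sat [pre ∩ g ∩ {V}, Id, UNIV, {s | (V,s) ∈ guar} ∩ post] holds, and stable(pre, rely) and stable(post, rely) hold, then the atomic event is valid: Σ ⊨ Atom(ev) sat [pre, rely, guar, post]. -/
open PiCore

section Aux

variable {Lbl Prog St Env : Type} {K : Type}
variable {ptran : Env → Prog × St → Prog × St → Prop} {bot : Prog} {Γ : Env}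

private lemma pair_idx {α : Type _} (x y : α) (cs : List α) (Q : α → α → Prop) :
    (∀ i : ℕ, (h : i + 1 < (x :: y :: cs).length) →
      Q ((x :: y :: cs).get ⟨i, Nat.lt_of_succ_lt h⟩) ((x :: y :: cs).get ⟨i + 1, h⟩)) ↔
    (Q x y ∧ ∀ i : ℕ, (h : i + 1 < (y :: cs).length) →
      Q ((y :: cs).get ⟨i, Nat.lt_of_succ_lt h⟩) ((y :: cs).get ⟨i + 1, h⟩)) := by
  constructor
  · intro H
    refine ⟨?_, ?_⟩
    · have h01 : (0 : ℕ) + 1 < (x :: y :: cs).length := by simp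
      simpa using H 0 h01
    · intro i h
      have h' : (i + 1) + 1 < (x :: y :: cs).length := by
        simpa using Nat.succ_lt_succ h
      simpa using H (i + 1) h'
  · rintro ⟨h0, H⟩ i h
    match i with
    | 0 => simpa using h0
    | (j + 1) =>
      have hj : j + 1 < (y :: cs).length := by
        simpa using Nat.lt_of_succ_lt_succ h
      simpa using H j hj

/-- Any computation starting from the terminated event with a state in `post`
commits. -/
private lemma term_commit {rely guar : Set (St × St)} {post : Set St}
    (hbot : ∀ (Γ : Env) (s : St) (c : Prog × St), ¬ ptran Γ (bot, s) c)
    (hpost : stable post rely) :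
    ∀ cl : List (EventSys Lbl Prog St × St), cpts K ptran bot Γ cl →
      ∀ t : St, cl.head? = some (EventSys.trig bot, t) → t ∈ post →
      (∀ i : ℕ, (h : i + 1 < cl.length) →
        (cl.get ⟨i, Nat.lt_of_succ_lt h⟩).1 = (cl.get ⟨i + 1, h⟩).1 →
        ((cl.get ⟨i, Nat.lt_of_succ_lt h⟩).2, (cl.get ⟨i + 1, h⟩).2) ∈ rely) →
      cl ∈ Commit K ptran bot Γ guar post := by
  intro cl hc
  induction hc with
  | @one S s =>
    intro t hhead ht _
    simp only [List.head?] at hhead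
    obtain ⟨hS, hs⟩ : S = EventSys.trig bot ∧ s = t := by
      constructor <;> { injection hhead with h'; rw [Prod.ext_iff] at h'; tauto }
    subst hS; subst hs
    constructor
    · intro i h; simp at h
    · intro c hc _
      simp only [List.getLast?] at hc
      injection hc with h'
      rw [← h']
      exact ht
  | @env S s t' cs h ih =>
    intro t hhead ht henv
    simp only [List.head?] at hhead
    obtain ⟨hS, hs⟩ : S = EventSys.trig bot ∧ s = t := by
      constructor <;> { injection hhead with h'; rw [Prod.ext_iff] at h'; tauto }
    subst hS; subst hs
    obtain ⟨henv0, henv'⟩ :=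
      (pair_idx _ _ _ (fun a b : EventSys Lbl Prog St × St =>
        a.1 = b.1 → (a.2, b.2) ∈ rely)).mp henv
    have hrel : (s, t') ∈ rely := henv0 rfl
    have ht' : t' ∈ post := hpost s t' ht hrel
    have ihc := ih t' rfl ht' henv'
    obtain ⟨ihc1, ihc2⟩ := ihc
    constructor
    · refine (pair_idx _ _ _ (fun a b : EventSys Lbl Prog St × St =>
        (∃ δ : TranKind Lbl × K, esStep K ptran bot Γ a δ b) →
          (a.2, b.2) ∈ guar)).mpr ⟨?_, ihc1⟩
      rintro ⟨δ, hstep⟩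
      cases hstep with
      | trigEvt hp => exact absurd hp (hbot Γ s _)
    · intro c hc
      rw [List.getLast?_cons_cons] at hc
      exact ihc2 c hc
  | @act S1 S2 s t' cs δ h1 h2 ih =>
    intro t hhead ht henv
    simp only [List.head?] at hhead
    obtain ⟨hS, hs⟩ : S1 = EventSys.trig bot ∧ s = t := by
      constructor <;> { injection hhead with h'; rw [Prod.ext_iff] at h'; tauto }
    subst hS
    cases h1 with
    | trigEvt hp => exact absurd hp (hbot Γ s _)

/-- Any `ptran`-chain gives rise to a program computation all of whose steps are
program transitions. -/
private lemma chain_cpt :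
    ∀ {a b : Prog × St}, Relation.ReflTransGen (fun c c' => ptran Γ c c') a b →
      ∃ cl : List (Prog × St), pcpts ptran Γ cl ∧ cl.head? = some a ∧
        cl.getLast? = some b ∧
        ∀ i : ℕ, (h : i + 1 < cl.length) →
          ptran Γ (cl.get ⟨i, Nat.lt_of_succ_lt h⟩) (cl.get ⟨i + 1, h⟩) := by
  intro a b hab
  induction hab using Relation.ReflTransGen.head_induction_on with
  | refl =>
    refine ⟨[b], ?_, rfl, rfl, ?_⟩
    · obtain ⟨P, s⟩ := b; exact pcpts.one
    · intro i h; simp at h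
  | @head a0 c0 hstep _hrest ih =>
    obtain ⟨cl, hp, hh, hl, hsteps⟩ := ih
    match cl, hh with
    | (c' :: cs), hh =>
      simp only [List.head?] at hh
      injection hh with hh'
      subst hh'
      refine ⟨a0 :: c' :: cs, ?_, rfl, ?_, ?_⟩
      · obtain ⟨P, u⟩ := a0; obtain ⟨Q, u'⟩ := c'
        exact pcpts.step hstep hp
      · rw [List.getLast?_cons_cons]; exact hl
      · exact (pair_idx _ _ _ (fun a b : Prog × St => ptran Γ a b)).mpr
          ⟨hstep, hsteps⟩

/-- Any computation starting from the atomic event with a state in `pre`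
commits. -/
private lemma atom_commit {ev : Set (Lbl × Set St × Prog)}
    {pre post : Set St} {rely guar : Set (St × St)}
    (hbot : ∀ (Γ : Env) (s : St) (c : Prog × St), ¬ ptran Γ (bot, s) c)
    (hneq : ∀ (Γ : Env) (P : Prog) (s t : St), ¬ ptran Γ (P, s) (P, t))
    (hbody : ∀ l g P, (l, g, P) ∈ ev → ∀ V : St,
      pValid ptran bot Γ P (pre ∩ g ∩ {V}) (IdRel St) Set.univ
        ({s | (V, s) ∈ guar} ∩ post))
    (hpre : stable pre rely) (hpost : stable post rely) :
    ∀ cl : List (EventSys Lbl Prog St × St), cpts K ptran bot Γ cl →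
      ∀ s : St, cl.head? = some (EventSys.atom ev, s) → s ∈ pre →
      (∀ i : ℕ, (h : i + 1 < cl.length) →
        (cl.get ⟨i, Nat.lt_of_succ_lt h⟩).1 = (cl.get ⟨i + 1, h⟩).1 →
        ((cl.get ⟨i, Nat.lt_of_succ_lt h⟩).2, (cl.get ⟨i + 1, h⟩).2) ∈ rely) →
      cl ∈ Commit K ptran bot Γ guar post := by
  intro cl hc
  induction hc with
  | @one S s0 =>
    intro s hhead _hs _
    simp only [List.head?] at hhead
    obtain ⟨hS, hs0⟩ : S = EventSys.atom ev ∧ s0 = s := by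
      constructor <;> { injection hhead with h'; rw [Prod.ext_iff] at h'; tauto }
    subst hS; subst hs0
    constructor
    · intro i h; simp at h
    · intro c hc hterm
      simp only [List.getLast?] at hc
      injection hc with h'
      rw [← h'] at hterm
      exact absurd hterm (by simp)
  | @env S s0 t' cs h ih =>
    intro s hhead hs henv
    simp only [List.head?] at hhead
    obtain ⟨hS, hs0⟩ : S = EventSys.atom ev ∧ s0 = s := by
      constructor <;> { injection hhead with h'; rw [Prod.ext_iff] at h'; tauto }
    subst hS
    rw [← hs0] at hs
    obtain ⟨henv0, henv'⟩ :=
      (pair_idx _ _ _ (fun a b : EventSys Lbl Prog St × St =>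
        a.1 = b.1 → (a.2, b.2) ∈ rely)).mp henv
    have hrel : (s0, t') ∈ rely := henv0 rfl
    have ht' : t' ∈ pre := hpre s0 t' hs hrel
    obtain ⟨ihc1, ihc2⟩ := ih t' rfl ht' henv'
    constructor
    · refine (pair_idx _ _ _ (fun a b : EventSys Lbl Prog St × St =>
        (∃ δ : TranKind Lbl × K, esStep K ptran bot Γ a δ b) →
          (a.2, b.2) ∈ guar)).mpr ⟨?_, ihc1⟩
      rintro ⟨δ, hstep⟩
      cases hstep
    · intro c hc
      rw [List.getLast?_cons_cons] at hc
      exact ihc2 c hc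
  | @act S1 S2 s0 t' cs δ h1 h2 _ih =>
    intro s hhead hs henv
    simp only [List.head?] at hhead
    obtain ⟨hS, hs0⟩ : S1 = EventSys.atom ev ∧ s0 = s := by
      constructor <;> { injection hhead with h'; rw [Prod.ext_iff] at h'; tauto }
    subst hS
    rw [← hs0] at hs
    cases h1 with
    | @atomEvt _ l g P _ _ κ hmem hg h3 =>
      -- build the program computation from the chain
      obtain ⟨cl', hp, hh, hl, hsteps⟩ := chain_cpt h3
      have hv := hbody l g P hmem s0
      have hmemcl : cl' ∈
          ({cl : List (Prog × St) | pcpts ptran Γ cl ∧ cl.head? = some (P, s0)} ∩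
            pAssume (pre ∩ g ∩ {s0}) (IdRel St)) := by
        refine ⟨⟨hp, hh⟩, ?_, ?_⟩
        · intro c hc
          rw [hh] at hc
          injection hc with h'
          rw [← h']
          exact ⟨⟨hs, hg⟩, rfl⟩
        · intro i h heq
          exfalso
          have hstep := hsteps i h
          set a := cl'.get ⟨i, Nat.lt_of_succ_lt h⟩ with ha
          set b := cl'.get ⟨i + 1, h⟩ with hb
          obtain ⟨P1, u1⟩ := a
          obtain ⟨P2, u2⟩ := b
          simp only at heq
          subst heq
          exact hneq Γ P1 u1 u2 hstep
      have hcom := hv s0 hmemcl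
      obtain ⟨_, hcom2⟩ := hcom
      have hpost' := hcom2 (bot, t') hl rfl
      obtain ⟨hguar, hposts⟩ := hpost'
      -- tail commits
      obtain ⟨_, henv'⟩ :=
        (pair_idx _ _ _ (fun a b : EventSys Lbl Prog St × St =>
          a.1 = b.1 → (a.2, b.2) ∈ rely)).mp henv
      obtain ⟨tc1, tc2⟩ :=
        term_commit (rely := rely) (guar := guar) hbot hpost _ h2 t' rfl hposts henv'
      constructor
      · exact (pair_idx _ _ _ (fun a b : EventSys Lbl Prog St × St =>
          (∃ δ : TranKind Lbl × K, esStep K ptran bot Γ a δ b) →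
            (a.2, b.2) ∈ guar)).mpr ⟨fun _ => hguar, tc1⟩
      · intro c hc
        rw [List.getLast?_cons_cons] at hc
        exact tc2 c hc

end Aux

/-- **Soundness of the RG-AtomEvt rule.** -/
theorem rg_atomEvt_sound
    {Lbl Prog St Env : Type} (K : Type)
    (ptran : Env → Prog × St → Prog × St → Prop) (bot : Prog)
    (hbot : ∀ (Γ : Env) (s : St) (c : Prog × St), ¬ ptran Γ (bot, s) c)
    (hneq : ∀ (Γ : Env) (P : Prog) (s t : St), ¬ ptran Γ (P, s) (P, t))
    (Γ : Env) (ev : Set (Lbl × Set St × Prog))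
    (pre : Set St) (rely guar : Set (St × St)) (post : Set St)
    (hbody : ∀ l g P, (l, g, P) ∈ ev → ∀ V : St,
      pValid ptran bot Γ P (pre ∩ g ∩ {V}) (IdRel St) Set.univ
        ({s | (V, s) ∈ guar} ∩ post))
    (hpre : stable pre rely)
    (hpost : stable post rely) :
    esValid K ptran bot Γ (EventSys.atom ev) pre rely guar post := by
  intro s cl hcl
  obtain ⟨⟨hcpts, hhead⟩, hpre0, henv⟩ := hcl
  have hs : s ∈ pre := hpre0 (EventSys.atom ev, s) (by simp [hhead])
  exact atom_commit hbot hneq hbody hpre hpost cl hcpts s hhead hs henv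
end

section
/- Soundness of the RG-Join rule: assume ⊥ has no program transitions and every program transition changes the program component. If (1) Σ ⊨ S1 sat [pre1, rely1, guar1, post1], (2) Σ ⊨ S2 sat [pre2, rely2, guar2, post2], (3) guar1 ∪ guar2 ⊆ guar, (4) rely ∪ guar2 ⊆ rely1, (5) rely ∪ guar1 ⊆ rely2, and (6) Id ⊆ guar, then the concurrent join is valid: Σ ⊨ S1 ⋈ S2 sat [pre1 ∩ pre2, rely, guar, post1 ∩ post2]. -/
/-!
Read off the components of a computation of `S₁ ⋈ S₂`: while the join runs this gives a
computation of each `Sᵢ`, and after the step to `⟨⊥⟩` both continue with the common tail. A join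
step moves at most one component, and the other component sees it as an environment step. That
step lies in the mover's guarantee, hence (by `rely ∪ guarᵢ ⊆ relyⱼ`) in the other component's
rely condition. By induction on prefixes, the mover's guarantee at a step follows from validity of
the mover on the prefix ending there, whose assumption holds by induction; so both projections
satisfy their assumptions, and their commitments combine by `guar₁ ∪ guar₂ ⊆ guar` and
`Id ⊆ guar` (the terminating step of the join leaves the state unchanged).
-/

namespace List

variable {α : Type*} {R : α → α → Prop}

theorem isChain_concat_iff {l : List α} {b : α} :
    IsChain R (l ++ [b]) ↔ IsChain R l ∧ ∀ a ∈ l.getLast?, R a b := by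
  simp [isChain_append]

theorem isChain_append_iff_of_getLast?_eq {l r : List α} {x : α} (hx : l.getLast? = some x) :
    IsChain R (l ++ r) ↔ IsChain R l ∧ IsChain R (x :: r) := by
  rw [isChain_append, isChain_cons, hx]
  simp [and_comm]

theorem getLast?_append_of_getLast?_eq {l r : List α} {x : α} (hx : l.getLast? = some x) :
    (l ++ r).getLast? = (x :: r).getLast? := by
  obtain ⟨l, rfl⟩ := getLast?_eq_some_iff.1 hx
  rw [append_assoc, singleton_append, getLast?_append_of_ne_nil _ (cons_ne_nil _ _)]

theorem IsChain.and {S : α → α → Prop} {l : List α} (hR : IsChain R l) (hS : IsChain S l) :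
    IsChain (fun a b => R a b ∧ S a b) l := by
  rw [isChain_iff_getElem] at *
  exact fun i hi => ⟨hR i hi, hS i hi⟩

theorem isChain_and_of_rely_guarantee {T R₁ R₂ G₁ G₂ : α → α → Prop} {l : List α}
    (hT : IsChain T l)
    (hstep : ∀ a b, T a b → R₁ a b ∧ (G₁ a b → R₂ a b) ∨ R₂ a b ∧ (G₂ a b → R₁ a b))
    (hG₁ : ∀ l', l' <+: l → IsChain R₁ l' → IsChain G₁ l')
    (hG₂ : ∀ l', l' <+: l → IsChain R₂ l' → IsChain G₂ l') :
    IsChain R₁ l ∧ IsChain R₂ l := by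
  induction l using reverseRecOn with
  | nil => simp
  | append_singleton l b ih =>
    obtain ⟨ih₁, ih₂⟩ := ih (hT.prefix (prefix_append _ _))
      (fun l' hl' => hG₁ l' (hl'.trans (prefix_append _ _)))
      (fun l' hl' => hG₂ l' (hl'.trans (prefix_append _ _)))
    rw [isChain_concat_iff] at hT
    rw [isChain_concat_iff, isChain_concat_iff]
    rcases h : l.getLast? with _ | a
    · simp [ih₁, ih₂]
    · rcases hstep a b (hT.2 a h) with ⟨h₁, h₂⟩ | ⟨h₂, h₁⟩
      · have hg := hG₁ _ prefix_rfl (isChain_concat_iff.2 ⟨ih₁, by simpa [h] using h₁⟩)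
        exact ⟨⟨ih₁, by simpa using h₁⟩, ih₂, by simpa using h₂ ((isChain_concat_iff.1 hg).2 a h)⟩
      · have hg := hG₂ _ prefix_rfl (isChain_concat_iff.2 ⟨ih₂, by simpa [h] using h₂⟩)
        exact ⟨⟨ih₁, by simpa using h₁ ((isChain_concat_iff.1 hg).2 a h)⟩, ih₂, by simpa using h₂⟩

end List

namespace PiCore

variable {Lbl Prog St Env : Type} {K : Type} {ptran : Env → Prog × St → Prog × St → Prop}
  {bot : Prog} {Γ : Env}

section Relations

variable (K ptran bot Γ)

def CptStep (a b : EventSys Lbl Prog St × St) : Prop :=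
  a.1 = b.1 ∨ ∃ δ : TranKind Lbl × K, esStep K ptran bot Γ a δ b

def CompStepIn (guar : Set (St × St)) (a b : EventSys Lbl Prog St × St) : Prop :=
  (∃ δ : TranKind Lbl × K, esStep K ptran bot Γ a δ b) → (a.2, b.2) ∈ guar

end Relations

def EnvStepIn (rely : Set (St × St)) (a b : EventSys Lbl Prog St × St) : Prop :=
  a.1 = b.1 → (a.2, b.2) ∈ rely

theorem cpts_iff_isChain {cl : List (EventSys Lbl Prog St × St)} :
    cpts K ptran bot Γ cl ↔ cl ≠ [] ∧ cl.IsChain (CptStep K ptran bot Γ) := by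
  constructor
  · intro h
    induction h with
    | one => simp
    | env _ ih => exact ⟨by simp, ih.2.cons_cons (Or.inl rfl)⟩
    | act hs _ ih => exact ⟨by simp, ih.2.cons_cons (Or.inr ⟨_, hs⟩)⟩
  · rintro ⟨hne, hc⟩
    induction cl with
    | nil => exact absurd rfl hne
    | cons a cs ih =>
      obtain ⟨S, s⟩ := a
      rcases cs with _ | ⟨⟨T, t⟩, cs⟩
      · exact cpts.one
      · obtain ⟨hab, hc⟩ := List.isChain_cons_cons.1 hc
        rcases hab with rfl | ⟨δ, hs⟩
        · exact cpts.env (ih (by simp) hc)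
        · exact cpts.act hs (ih (by simp) hc)

theorem mem_assume_iff {pre : Set St} {rely : Set (St × St)}
    {cl : List (EventSys Lbl Prog St × St)} :
    cl ∈ Assume (Lbl := Lbl) (Prog := Prog) pre rely ↔
      (∀ c ∈ cl.head?, c.2 ∈ pre) ∧ cl.IsChain (EnvStepIn rely) := by
  simp only [Assume, Set.mem_ofPred_eq, List.isChain_iff_getElem, List.get_eq_getElem]
  exact and_congr_right fun _ => ⟨fun h i hi => h i (by omega), fun h i hi => h i (by omega)⟩

theorem mem_commit_iff {guar : Set (St × St)} {post : Set St}
    {cl : List (EventSys Lbl Prog St × St)} :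
    cl ∈ Commit K ptran bot Γ guar post ↔
      cl.IsChain (CompStepIn K ptran bot Γ guar) ∧
        ∀ c ∈ cl.getLast?, c.1 = EventSys.trig bot → c.2 ∈ post := by
  simp only [Commit, Set.mem_ofPred_eq, List.isChain_iff_getElem, List.get_eq_getElem]
  exact and_congr_left fun _ => ⟨fun h i hi => h i (by omega), fun h i hi => h i (by omega)⟩

theorem esValid.mem_commit {S : EventSys Lbl Prog St} {pre : Set St}
    {rely guar : Set (St × St)} {post : Set St}
    (h : esValid K ptran bot Γ S pre rely guar post) {cl : List (EventSys Lbl Prog St × St)}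
    {s : St} (hhead : cl.head? = some (S, s)) (hs : s ∈ pre)
    (hc : cl.IsChain (CptStep K ptran bot Γ)) (hr : cl.IsChain (EnvStepIn rely)) :
    cl ∈ Commit K ptran bot Γ guar post :=
  h s ⟨⟨cpts_iff_isChain.2 ⟨List.ne_nil_of_mem (List.mem_of_mem_head? hhead), hc⟩, hhead⟩,
    mem_assume_iff.2 ⟨by simpa [hhead] using hs, hr⟩⟩

theorem esValid.isChain_compStepIn_of_prefix {S : EventSys Lbl Prog St} {pre : Set St}
    {rely guar : Set (St × St)} {post : Set St}
    (h : esValid K ptran bot Γ S pre rely guar post) {cl : List (EventSys Lbl Prog St × St)}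
    {s : St} (hhead : cl.head? = some (S, s)) (hs : s ∈ pre)
    (hc : cl.IsChain (CptStep K ptran bot Γ)) {cl' : List (EventSys Lbl Prog St × St)}
    (hcl' : cl' <+: cl) (hr : cl'.IsChain (EnvStepIn rely)) :
    cl'.IsChain (CompStepIn K ptran bot Γ guar) := by
  rcases cl' with _ | ⟨c, cl'⟩
  · exact List.isChain_nil
  · obtain ⟨t, rfl⟩ := hcl'
    have hhead' : (c :: cl').head? = some (S, s) := by simpa using hhead
    exact (mem_commit_iff.1 (h.mem_commit hhead' hs (hc.prefix (List.prefix_append _ t)) hr)).1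

section Join

/-- Running join configurations are kept as component pairs, so that projecting a computation
onto a component is a `List.map`. -/
def joinCfg (c : (EventSys Lbl Prog St × EventSys Lbl Prog St) × St) :
    EventSys Lbl Prog St × St :=
  (.join c.1.1 c.1.2, c.2)

def fstCfg (c : (EventSys Lbl Prog St × EventSys Lbl Prog St) × St) :
    EventSys Lbl Prog St × St :=
  (c.1.1, c.2)

def sndCfg (c : (EventSys Lbl Prog St × EventSys Lbl Prog St) × St) :
    EventSys Lbl Prog St × St :=
  (c.1.2, c.2)

variable {a b : (EventSys Lbl Prog St × EventSys Lbl Prog St) × St}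

theorem esStep_join_join {A B A' B' : EventSys Lbl Prog St} {s t : St} {δ : TranKind Lbl × K}
    (h : esStep K ptran bot Γ (.join A B, s) δ (.join A' B', t)) :
    B = B' ∧ esStep K ptran bot Γ (A, s) δ (A', t) ∨
      A = A' ∧ esStep K ptran bot Γ (B, s) δ (B', t) := by
  cases h with
  | join1 h => exact Or.inl ⟨rfl, h⟩
  | join2 h => exact Or.inr ⟨rfl, h⟩

theorem cptStep_joinCfg (h : CptStep K ptran bot Γ (joinCfg a) (joinCfg b)) :
    a.1.2 = b.1.2 ∧ CptStep K ptran bot Γ (fstCfg a) (fstCfg b) ∨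
      a.1.1 = b.1.1 ∧ CptStep K ptran bot Γ (sndCfg a) (sndCfg b) := by
  rcases h with h | ⟨δ, h⟩
  · simp only [joinCfg, EventSys.join.injEq] at h
    exact Or.inl ⟨h.2, Or.inl h.1⟩
  · rcases esStep_join_join h with ⟨hB, h⟩ | ⟨hA, h⟩
    · exact Or.inl ⟨hB, Or.inr ⟨δ, h⟩⟩
    · exact Or.inr ⟨hA, Or.inr ⟨δ, h⟩⟩

theorem cptStep_fstCfg (h : CptStep K ptran bot Γ (joinCfg a) (joinCfg b)) :
    CptStep K ptran bot Γ (fstCfg a) (fstCfg b) := by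
  rcases cptStep_joinCfg h with ⟨-, h⟩ | ⟨hA, -⟩
  exacts [h, Or.inl hA]

theorem cptStep_sndCfg (h : CptStep K ptran bot Γ (joinCfg a) (joinCfg b)) :
    CptStep K ptran bot Γ (sndCfg a) (sndCfg b) := by
  rcases cptStep_joinCfg h with ⟨hB, -⟩ | ⟨-, h⟩
  exacts [Or.inl hB, h]

theorem compStepIn_joinCfg {guar guar1 guar2 : Set (St × St)} (hg : guar1 ∪ guar2 ⊆ guar)
    (h1 : CompStepIn K ptran bot Γ guar1 (fstCfg a) (fstCfg b))
    (h2 : CompStepIn K ptran bot Γ guar2 (sndCfg a) (sndCfg b)) :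
    CompStepIn K ptran bot Γ guar (joinCfg a) (joinCfg b) := by
  rintro ⟨δ, h⟩
  rcases esStep_join_join h with ⟨-, h⟩ | ⟨-, h⟩
  exacts [hg (Or.inl (h1 ⟨δ, h⟩)), hg (Or.inr (h2 ⟨δ, h⟩))]

theorem envStepIn_components_of_joinCfg {rely rely1 rely2 guar1 guar2 : Set (St × St)}
    (h4 : rely ∪ guar2 ⊆ rely1) (h5 : rely ∪ guar1 ⊆ rely2)
    (hc : CptStep K ptran bot Γ (joinCfg a) (joinCfg b))
    (hr : EnvStepIn rely (joinCfg a) (joinCfg b)) :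
    EnvStepIn rely1 (fstCfg a) (fstCfg b) ∧
        (CompStepIn K ptran bot Γ guar1 (fstCfg a) (fstCfg b) →
          EnvStepIn rely2 (sndCfg a) (sndCfg b)) ∨
      EnvStepIn rely2 (sndCfg a) (sndCfg b) ∧
        (CompStepIn K ptran bot Γ guar2 (sndCfg a) (sndCfg b) →
          EnvStepIn rely1 (fstCfg a) (fstCfg b)) := by
  obtain ⟨⟨A, B⟩, s⟩ := a
  obtain ⟨⟨A', B'⟩, t⟩ := b
  simp only [EnvStepIn, joinCfg, fstCfg, sndCfg, EventSys.join.injEq, and_imp] at hr ⊢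
  rcases cptStep_joinCfg hc with ⟨rfl, hA⟩ | ⟨rfl, hB⟩
  · refine Or.inl ⟨fun hA' => h4 (Or.inl (hr hA' rfl)), fun hg _ => ?_⟩
    rcases hA with hA | hA
    exacts [h5 (Or.inl (hr hA rfl)), h5 (Or.inr (hg hA))]
  · refine Or.inr ⟨fun hB' => h5 (Or.inl (hr rfl hB')), fun hg _ => ?_⟩
    rcases hB with hB | hB
    exacts [h4 (Or.inl (hr rfl hB)), h4 (Or.inr (hg hB))]

theorem cptStep_join_cases {A B : EventSys Lbl Prog St} {s : St} {c : EventSys Lbl Prog St × St}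
    (h : CptStep K ptran bot Γ (.join A B, s) c) :
    (∃ A' B', c.1 = .join A' B') ∨
      A = .trig bot ∧ B = .trig bot ∧ c = (.trig bot, s) := by
  rcases h with h | ⟨δ, h⟩
  · exact Or.inl ⟨A, B, h.symm⟩
  · cases h with
    | join1 => exact Or.inl ⟨_, _, rfl⟩
    | join2 => exact Or.inl ⟨_, _, rfl⟩
    | joinFin => exact Or.inr ⟨rfl, rfl, rfl⟩

theorem exists_joinCfg_decomposition {cl : List (EventSys Lbl Prog St × St)}
    (hc : cl.IsChain (CptStep K ptran bot Γ)) {S1 S2 : EventSys Lbl Prog St} {s : St}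
    (hhead : cl.head? = some (.join S1 S2, s)) :
    ∃ L : List ((EventSys Lbl Prog St × EventSys Lbl Prog St) × St), L.head? = some ((S1, S2), s) ∧
      (cl = L.map joinCfg ∨ ∃ u rest, L.getLast? = some ((.trig bot, .trig bot), u) ∧
        cl = L.map joinCfg ++ (.trig bot, u) :: rest) := by
  induction cl generalizing S1 S2 s with
  | nil => cases hhead
  | cons c cs ih =>
    obtain rfl : c = (.join S1 S2, s) := by simpa using hhead
    rcases cs with _ | ⟨⟨E, t⟩, cs⟩
    · exact ⟨[((S1, S2), s)], rfl, Or.inl rfl⟩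
    obtain ⟨hcd, hcs⟩ := List.isChain_cons_cons.1 hc
    rcases cptStep_join_cases hcd with ⟨A, B, hd⟩ | ⟨rfl, rfl, hd⟩
    · obtain rfl : E = .join A B := hd
      obtain ⟨L, hL, hcl⟩ := ih hcs rfl
      obtain ⟨x, L, rfl⟩ :=
        List.exists_cons_of_ne_nil (List.ne_nil_of_mem (List.mem_of_mem_head? hL))
      refine ⟨((S1, S2), s) :: x :: L, rfl, ?_⟩
      rcases hcl with h | ⟨u, rest, hlast, h⟩
      · exact Or.inl (by simp [h, joinCfg])
      · exact Or.inr ⟨u, rest, by simpa using hlast, by simp [h, joinCfg]⟩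
    · obtain ⟨rfl, rfl⟩ := Prod.mk.inj hd
      exact ⟨[((.trig bot, .trig bot), t)], rfl, Or.inr ⟨t, cs, rfl, rfl⟩⟩

variable {L : List ((EventSys Lbl Prog St × EventSys Lbl Prog St) × St)}

theorem isChain_cptStep_map_fstCfg (h : (L.map joinCfg).IsChain (CptStep K ptran bot Γ)) :
    (L.map fstCfg).IsChain (CptStep K ptran bot Γ) :=
  List.isChain_map_of_isChain _ (fun _ _ => cptStep_fstCfg) ((List.isChain_map _).1 h)

theorem isChain_cptStep_map_sndCfg (h : (L.map joinCfg).IsChain (CptStep K ptran bot Γ)) :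
    (L.map sndCfg).IsChain (CptStep K ptran bot Γ) :=
  List.isChain_map_of_isChain _ (fun _ _ => cptStep_sndCfg) ((List.isChain_map _).1 h)

theorem isChain_compStepIn_map_joinCfg {guar guar1 guar2 : Set (St × St)}
    (hg : guar1 ∪ guar2 ⊆ guar) (h1 : (L.map fstCfg).IsChain (CompStepIn K ptran bot Γ guar1))
    (h2 : (L.map sndCfg).IsChain (CompStepIn K ptran bot Γ guar2)) :
    (L.map joinCfg).IsChain (CompStepIn K ptran bot Γ guar) :=
  (List.isChain_map _).2 <| (((List.isChain_map _).1 h1).and ((List.isChain_map _).1 h2)).imp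
    fun _ _ h => compStepIn_joinCfg hg h.1 h.2

theorem isChain_envStepIn_map_fstCfg_sndCfg {S1 S2 : EventSys Lbl Prog St} {pre1 pre2 : Set St}
    {rely rely1 rely2 guar1 guar2 : Set (St × St)} {post1 post2 : Set St}
    (h1 : esValid K ptran bot Γ S1 pre1 rely1 guar1 post1)
    (h2 : esValid K ptran bot Γ S2 pre2 rely2 guar2 post2)
    (h4 : rely ∪ guar2 ⊆ rely1) (h5 : rely ∪ guar1 ⊆ rely2) {s : St}
    (hhead : L.head? = some ((S1, S2), s)) (hs : s ∈ pre1 ∩ pre2)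
    (hc : (L.map joinCfg).IsChain (CptStep K ptran bot Γ))
    (hr : (L.map joinCfg).IsChain (EnvStepIn rely)) :
    (L.map fstCfg).IsChain (EnvStepIn rely1) ∧ (L.map sndCfg).IsChain (EnvStepIn rely2) := by
  have hhead1 : (L.map fstCfg).head? = some (S1, s) := by simp [hhead, fstCfg]
  have hhead2 : (L.map sndCfg).head? = some (S2, s) := by simp [hhead, sndCfg]
  simp only [List.isChain_map] at hc hr ⊢
  refine List.isChain_and_of_rely_guarantee (hc.and hr)
    (fun a b hab => envStepIn_components_of_joinCfg h4 h5 hab.1 hab.2)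
    (fun l' hl' hr' => ?_) (fun l' hl' hr' => ?_)
  · exact (List.isChain_map _).1 <| h1.isChain_compStepIn_of_prefix hhead1 hs.1
      (isChain_cptStep_map_fstCfg ((List.isChain_map _).2 hc)) (hl'.map fstCfg)
      ((List.isChain_map _).2 hr')
  · exact (List.isChain_map _).1 <| h2.isChain_compStepIn_of_prefix hhead2 hs.2
      (isChain_cptStep_map_sndCfg ((List.isChain_map _).2 hc)) (hl'.map sndCfg)
      ((List.isChain_map _).2 hr')

theorem map_joinCfg_mem_commit {S1 S2 : EventSys Lbl Prog St} {pre1 pre2 : Set St}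
    {rely rely1 rely2 guar guar1 guar2 : Set (St × St)} {post post1 post2 : Set St}
    (h1 : esValid K ptran bot Γ S1 pre1 rely1 guar1 post1)
    (h2 : esValid K ptran bot Γ S2 pre2 rely2 guar2 post2)
    (h3 : guar1 ∪ guar2 ⊆ guar) (h4 : rely ∪ guar2 ⊆ rely1) (h5 : rely ∪ guar1 ⊆ rely2)
    {s : St} (hhead : L.head? = some ((S1, S2), s)) (hs : s ∈ pre1 ∩ pre2)
    (hc : (L.map joinCfg).IsChain (CptStep K ptran bot Γ))
    (hr : (L.map joinCfg).IsChain (EnvStepIn rely)) :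
    L.map joinCfg ∈ Commit K ptran bot Γ guar post := by
  obtain ⟨hr1, hr2⟩ := isChain_envStepIn_map_fstCfg_sndCfg h1 h2 h4 h5 hhead hs hc hr
  have hg1 := h1.mem_commit (by simp [hhead, fstCfg]) hs.1 (isChain_cptStep_map_fstCfg hc) hr1
  have hg2 := h2.mem_commit (by simp [hhead, sndCfg]) hs.2 (isChain_cptStep_map_sndCfg hc) hr2
  refine mem_commit_iff.2
    ⟨isChain_compStepIn_map_joinCfg h3 (mem_commit_iff.1 hg1).1 (mem_commit_iff.1 hg2).1, ?_⟩
  intro c hc' hbot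
  obtain ⟨x, -, rfl⟩ := List.mem_map.1 (List.mem_of_mem_getLast? hc')
  cases hbot

-- Each component continues with `rest`, not `(⟨⊥⟩, u) :: rest`: repeating `(⟨⊥⟩, u)` would add
-- an environment step `(u, u)` that the component's rely condition need not allow.
theorem map_joinCfg_append_mem_commit {S1 S2 : EventSys Lbl Prog St} {pre1 pre2 : Set St}
    {rely rely1 rely2 guar guar1 guar2 : Set (St × St)} {post1 post2 : Set St}
    (h1 : esValid K ptran bot Γ S1 pre1 rely1 guar1 post1)
    (h2 : esValid K ptran bot Γ S2 pre2 rely2 guar2 post2)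
    (h3 : guar1 ∪ guar2 ⊆ guar) (h4 : rely ∪ guar2 ⊆ rely1) (h5 : rely ∪ guar1 ⊆ rely2)
    (h6 : IdRel St ⊆ guar) {s u : St} {rest : List (EventSys Lbl Prog St × St)}
    (hhead : L.head? = some ((S1, S2), s)) (hlast : L.getLast? = some ((.trig bot, .trig bot), u))
    (hs : s ∈ pre1 ∩ pre2)
    (hc : (L.map joinCfg ++ (.trig bot, u) :: rest).IsChain (CptStep K ptran bot Γ))
    (hr : (L.map joinCfg ++ (.trig bot, u) :: rest).IsChain (EnvStepIn rely)) :
    L.map joinCfg ++ (.trig bot, u) :: rest ∈ Commit K ptran bot Γ guar (post1 ∩ post2) := by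
  have hlastJ : (L.map joinCfg).getLast? = some (.join (.trig bot) (.trig bot), u) := by
    simp [hlast, joinCfg]
  have hlast1 : (L.map fstCfg).getLast? = some (.trig bot, u) := by simp [hlast, fstCfg]
  have hlast2 : (L.map sndCfg).getLast? = some (.trig bot, u) := by simp [hlast, sndCfg]
  rw [List.isChain_append_iff_of_getLast?_eq hlastJ, List.isChain_cons_cons] at hc hr
  obtain ⟨hr1, hr2⟩ := isChain_envStepIn_map_fstCfg_sndCfg h1 h2 h4 h5 hhead hs hc.1 hr.1
  have hg1 := h1.mem_commit (cl := L.map fstCfg ++ rest) (by simp [hhead, fstCfg]) hs.1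
    ((List.isChain_append_iff_of_getLast?_eq hlast1).2 ⟨isChain_cptStep_map_fstCfg hc.1, hc.2.2⟩)
    ((List.isChain_append_iff_of_getLast?_eq hlast1).2
      ⟨hr1, hr.2.2.imp fun _ _ h e => h4 (Or.inl (h e))⟩)
  have hg2 := h2.mem_commit (cl := L.map sndCfg ++ rest) (by simp [hhead, sndCfg]) hs.2
    ((List.isChain_append_iff_of_getLast?_eq hlast2).2 ⟨isChain_cptStep_map_sndCfg hc.1, hc.2.2⟩)
    ((List.isChain_append_iff_of_getLast?_eq hlast2).2
      ⟨hr2, hr.2.2.imp fun _ _ h e => h5 (Or.inl (h e))⟩)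
  rw [mem_commit_iff, List.isChain_append_iff_of_getLast?_eq hlast1,
    List.getLast?_append_of_getLast?_eq hlast1] at hg1
  rw [mem_commit_iff, List.isChain_append_iff_of_getLast?_eq hlast2,
    List.getLast?_append_of_getLast?_eq hlast2] at hg2
  rw [mem_commit_iff, List.isChain_append_iff_of_getLast?_eq hlastJ, List.isChain_cons_cons,
    List.getLast?_append_of_ne_nil _ (List.cons_ne_nil _ _)]
  exact ⟨⟨isChain_compStepIn_map_joinCfg h3 hg1.1.1 hg2.1.1, fun _ => h6 rfl,
    hg1.1.2.imp fun _ _ h e => h3 (Or.inl (h e))⟩, fun c hc hb => ⟨hg1.2 c hc hb, hg2.2 c hc hb⟩⟩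

end Join

end PiCore

open PiCore in
theorem rg_join_sound_general
    {Lbl Prog St Env : Type} (K : Type)
    (ptran : Env → Prog × St → Prog × St → Prop) (bot : Prog)
    (Γ : Env) (S1 S2 : EventSys Lbl Prog St)
    (pre1 pre2 : Set St) (rely rely1 rely2 guar guar1 guar2 : Set (St × St))
    (post1 post2 : Set St)
    (h1 : esValid K ptran bot Γ S1 pre1 rely1 guar1 post1)
    (h2 : esValid K ptran bot Γ S2 pre2 rely2 guar2 post2)
    (h3 : guar1 ∪ guar2 ⊆ guar)
    (h4 : rely ∪ guar2 ⊆ rely1)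
    (h5 : rely ∪ guar1 ⊆ rely2)
    (h6 : IdRel St ⊆ guar) :
    esValid K ptran bot Γ (EventSys.join S1 S2) (pre1 ∩ pre2) rely guar
      (post1 ∩ post2) := by
  rintro s cl ⟨⟨hcpts, hhead⟩, hA⟩
  obtain ⟨hpre, hr⟩ := mem_assume_iff.1 hA
  have hs : s ∈ pre1 ∩ pre2 := hpre _ hhead
  have hc := (cpts_iff_isChain.1 hcpts).2
  obtain ⟨L, hL, rfl | ⟨u, rest, hlast, rfl⟩⟩ := exists_joinCfg_decomposition hc hhead
  · exact map_joinCfg_mem_commit h1 h2 h3 h4 h5 hL hs hc hr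
  · exact map_joinCfg_append_mem_commit h1 h2 h3 h4 h5 h6 hL hlast hs hc hr

open PiCore in
/-- **Soundness of the RG-Join rule.** -/
theorem rg_join_sound
    {Lbl Prog St Env : Type} (K : Type)
    (ptran : Env → Prog × St → Prog × St → Prop) (bot : Prog)
    (hbot : ∀ (Γ : Env) (s : St) (c : Prog × St), ¬ ptran Γ (bot, s) c)
    (hneq : ∀ (Γ : Env) (P : Prog) (s t : St), ¬ ptran Γ (P, s) (P, t))
    (Γ : Env) (S1 S2 : EventSys Lbl Prog St)
    (pre1 pre2 : Set St) (rely rely1 rely2 guar guar1 guar2 : Set (St × St))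
    (post1 post2 : Set St)
    (h1 : esValid K ptran bot Γ S1 pre1 rely1 guar1 post1)
    (h2 : esValid K ptran bot Γ S2 pre2 rely2 guar2 post2)
    (h3 : guar1 ∪ guar2 ⊆ guar)
    (h4 : rely ∪ guar2 ⊆ rely1)
    (h5 : rely ∪ guar1 ⊆ rely2)
    (h6 : IdRel St ⊆ guar) :
    esValid K ptran bot Γ (EventSys.join S1 S2) (pre1 ∩ pre2) rely guar
      (post1 ∩ post2) :=
  rg_join_sound_general K ptran bot Γ S1 S2 pre1 pre2 rely rely1 rely2 guar guar1 guar2 post1 post2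
    h1 h2 h3 h4 h5 h6
end

section
/- Soundness of the RG-ParEvtSys rule: assume ⊥ has no program transitions and every program transition changes the program component. Let PS : K → EventSystems be a parallel event system. If there exist functions Pre, Post : K → Set St and Rely, Guar : K → Set (St × St) such that (1) for every κ, Σ ⊨ PS(κ) sat [Pre κ, Rely κ, Guar κ, Post κ]; (2) for all κ ≠ κ', Guar κ ⊆ Rely κ'; (3) for every κ, pre ⊆ Pre κ; (4) for every κ, rely ⊆ Rely κ; (5) for every κ, Guar κ ⊆ guar; and (6) ⋂κ Post κ ⊆ post; then the parallel event system is valid: Σ ⊨pe PS sat [pre, rely, guar, post]. -/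
namespace PiCore

variable {Lbl Prog St Env : Type} (K : Type)
variable (ptran : Env → Prog × St → Prog × St → Prop) (bot : Prog)

section Par
variable {Lbl Prog St Env : Type} {K : Type} [DecidableEq K]
variable (ptran : Env → Prog × St → Prog × St → Prop) (bot : Prog) (Γ : Env)

/-- Labelled small-step semantics of parallel event systems. -/
inductive pesStep :
    (K → EventSys Lbl Prog St) × St → TranKind Lbl × K →
    (K → EventSys Lbl Prog St) × St → Prop where
  | par {PS : K → EventSys Lbl Prog St} {s t : St} {ξ : TranKind Lbl} {κ : K}
      {ES' : EventSys Lbl Prog St}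
      (h : esStep K ptran bot Γ (PS κ, s) (ξ, κ) (ES', t)) :
      pesStep (PS, s) (ξ, κ) (Function.update PS κ ES', t)

/-- Computations of parallel event systems. -/
inductive pesCpts : List ((K → EventSys Lbl Prog St) × St) → Prop where
  | one {PS s} : pesCpts [(PS, s)]
  | env {PS s t cs} (h : pesCpts ((PS, t) :: cs)) :
      pesCpts ((PS, s) :: (PS, t) :: cs)
  | act {PS1 PS2 s t cs} {δ : TranKind Lbl × K}
      (h1 : pesStep ptran bot Γ (PS1, s) δ (PS2, t))
      (h2 : pesCpts ((PS2, t) :: cs)) :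
      pesCpts ((PS1, s) :: (PS2, t) :: cs)

/-- The assumption function for parallel event systems. -/
def pesAssume (pre : Set St) (rely : Set (St × St)) :
    Set (List ((K → EventSys Lbl Prog St) × St)) :=
  {cl | (∀ c ∈ cl.head?, c.2 ∈ pre) ∧
    ∀ i : ℕ, (h : i + 1 < cl.length) →
      (cl.get ⟨i, Nat.lt_of_succ_lt h⟩).1 = (cl.get ⟨i + 1, h⟩).1 →
      ((cl.get ⟨i, Nat.lt_of_succ_lt h⟩).2, (cl.get ⟨i + 1, h⟩).2) ∈ rely}

/-- The commitment function for parallel event systems; a parallel configuration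
has terminated when every event system is the terminated event ⟨⊥⟩. -/
def pesCommit (guar : Set (St × St)) (post : Set St) :
    Set (List ((K → EventSys Lbl Prog St) × St)) :=
  {cl | (∀ i : ℕ, (h : i + 1 < cl.length) →
      (∃ δ : TranKind Lbl × K,
        pesStep ptran bot Γ (cl.get ⟨i, Nat.lt_of_succ_lt h⟩) δ (cl.get ⟨i + 1, h⟩)) →
      ((cl.get ⟨i, Nat.lt_of_succ_lt h⟩).2, (cl.get ⟨i + 1, h⟩).2) ∈ guar) ∧
    (∀ c ∈ cl.getLast?, (∀ κ : K, c.1 κ = EventSys.trig bot) → c.2 ∈ post)}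

/-- Validity of a rely-guarantee specification for a parallel event system:
`Σ ⊨pe PS sat [pre, rely, guar, post]`. -/
def pesValid (PS : K → EventSys Lbl Prog St)
    (pre : Set St) (rely guar : Set (St × St)) (post : Set St) : Prop :=
  ∀ s : St,
    {cl : List ((K → EventSys Lbl Prog St) × St) |
        pesCpts ptran bot Γ cl ∧ cl.head? = some (PS, s)} ∩
      pesAssume pre rely ⊆ pesCommit ptran bot Γ guar post

end Par

end PiCore

namespace PiCore

section Aux
variable {Lbl Prog St Env K : Type}
variable {ptran : Env → Prog × St → Prog × St → Prop} {bot : Prog} {Γ : Env}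

lemma esStep_out_choice {c c' : EventSys Lbl Prog St × St} {δ : TranKind Lbl × K}
    (h : esStep K ptran bot Γ c δ c') :
    ∀ A B : EventSys Lbl Prog St, c'.1 = EventSys.choice A B → sizeOf c'.1 < sizeOf c.1 := by
  induction h with
  | basicEvt h1 h2 => intro A B hAB; simp at hAB
  | atomEvt h1 h2 h3 => intro A B hAB; simp at hAB
  | trigEvt h => intro A B hAB; simp at hAB
  | seqStep h hne ih => intro A B hAB; simp at hAB
  | seqFin h => intro A B hAB; simp
  | choice1 h ih =>
      intro A B hAB
      have := ih A B hAB
      simp at this ⊢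
      omega
  | choice2 h ih =>
      intro A B hAB
      have := ih A B hAB
      simp at this ⊢
      omega
  | join1 h ih => intro A B hAB; simp at hAB
  | join2 h ih => intro A B hAB; simp at hAB
  | joinFin => intro A B hAB; simp at hAB
  | iterT h hne => intro A B hAB; simp at hAB
  | iterF h => intro A B hAB; simp at hAB

lemma esStep_ne (hneq : ∀ (Γ : Env) (P : Prog) (s t : St), ¬ ptran Γ (P, s) (P, t))
    {c c' : EventSys Lbl Prog St × St} {δ : TranKind Lbl × K}
    (h : esStep K ptran bot Γ c δ c') : c.1 ≠ c'.1 := by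
  induction h with
  | basicEvt h1 h2 => simp
  | atomEvt h1 h2 h3 => simp
  | trigEvt h =>
      simp only [ne_eq, EventSys.trig.injEq]
      intro he; subst he; exact hneq _ _ _ _ h
  | seqStep h hne ih =>
      simp only [ne_eq, EventSys.seq.injEq, not_and]
      intro he; exact absurd he ih
  | seqFin h =>
      intro he
      have h2 := congrArg sizeOf he
      simp at h2
  | choice1 h ih =>
      intro he
      have ha := esStep_out_choice h _ _ he.symm
      have h2 := congrArg sizeOf he
      simp at ha h2
      omega
  | choice2 h ih =>
      intro he
      have ha := esStep_out_choice h _ _ he.symm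
      have h2 := congrArg sizeOf he
      simp at ha h2
      omega
  | join1 h ih =>
      simp only [ne_eq, EventSys.join.injEq, not_and]
      intro he _; exact absurd he ih
  | join2 h ih =>
      simp only [ne_eq, EventSys.join.injEq, not_and']
      intro he _; exact absurd he ih
  | joinFin => simp
  | iterT h hne => simp
  | iterF h => simp

lemma pesStep_inv [DecidableEq K] {c c' : (K → EventSys Lbl Prog St) × St}
    {ξ : TranKind Lbl} {κ : K} (h : pesStep ptran bot Γ c (ξ, κ) c') :
    esStep K ptran bot Γ (c.1 κ, c.2) (ξ, κ) (c'.1 κ, c'.2) ∧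
      ∀ κ', κ' ≠ κ → c'.1 κ' = c.1 κ' := by
  cases h with
  | par h =>
    refine ⟨by simpa using h, fun κ' hk => ?_⟩
    simp [Function.update_of_ne hk]

lemma pesCpts_chain [DecidableEq K] {cl : List ((K → EventSys Lbl Prog St) × St)}
    (h : pesCpts ptran bot Γ cl) :
    ∀ i, (hi : i + 1 < cl.length) →
      cl[i].1 = cl[i+1].1 ∨ ∃ δ, pesStep ptran bot Γ cl[i] δ cl[i+1] := by
  induction h with
  | one => intro i hi; simp at hi
  | env h ih =>
    intro i hi
    match i with
    | 0 => left; rfl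
    | i + 1 => exact ih i (by simpa using hi)
  | act h1 h2 ih =>
    intro i hi
    match i with
    | 0 => right; exact ⟨_, h1⟩
    | i + 1 => exact ih i (by simpa using hi)

lemma cpts_of_chain : ∀ {cl : List (EventSys Lbl Prog St × St)}, cl ≠ [] →
    (∀ i, (hi : i + 1 < cl.length) →
      cl[i].1 = cl[i+1].1 ∨ ∃ δ : TranKind Lbl × K, esStep K ptran bot Γ cl[i] δ cl[i+1]) →
    cpts K ptran bot Γ cl
  | [], hne, _ => absurd rfl hne
  | [a], _, _ => by
      obtain ⟨S, st⟩ := a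
      exact cpts.one
  | a :: b :: cs, _, h => by
      have tail : cpts K ptran bot Γ (b :: cs) :=
        cpts_of_chain (by simp) (fun i hi => by
          have := h (i + 1) (by simpa using hi)
          simpa using this)
      obtain ⟨Sa, sa⟩ := a
      obtain ⟨Sb, sb⟩ := b
      rcases h 0 (by simp) with heq | ⟨δ, hstep⟩
      · simp at heq
        subst heq
        exact cpts.env tail
      · exact cpts.act (by simpa using hstep) tail

end Aux
end PiCore

open PiCore in
/-- **Soundness of the RG-ParEvtSys rule.** -/
theorem rg_parEvtSys_sound
    {Lbl Prog St Env K : Type} [DecidableEq K]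
    (ptran : Env → Prog × St → Prog × St → Prop) (bot : Prog)
    (hbot : ∀ (Γ : Env) (s : St) (c : Prog × St), ¬ ptran Γ (bot, s) c)
    (hneq : ∀ (Γ : Env) (P : Prog) (s t : St), ¬ ptran Γ (P, s) (P, t))
    (Γ : Env) (PS : K → EventSys Lbl Prog St)
    (pre : Set St) (rely guar : Set (St × St)) (post : Set St)
    (Pre Post : K → Set St) (Rely Guar : K → Set (St × St))
    (h1 : ∀ κ : K, esValid K ptran bot Γ (PS κ) (Pre κ) (Rely κ) (Guar κ) (Post κ))
    (h2 : ∀ κ κ' : K, κ ≠ κ' → Guar κ ⊆ Rely κ')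
    (h3 : ∀ κ : K, pre ⊆ Pre κ)
    (h4 : ∀ κ : K, rely ⊆ Rely κ)
    (h5 : ∀ κ : K, Guar κ ⊆ guar)
    (h6 : (⋂ κ : K, Post κ) ⊆ post) :
    pesValid ptran bot Γ PS pre rely guar post := by
  intro s cl hcl
  obtain ⟨⟨hcpts, hhead⟩, hpre, hrely⟩ := hcl
  have hne : cl ≠ [] := by intro h; rw [h] at hhead; simp at hhead
  have hlen : 0 < cl.length := List.length_pos_iff.mpr hne
  have h0 : cl[0] = (PS, s) := by
    rw [List.head?_eq_getElem?, List.getElem?_eq_getElem hlen] at hhead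
    exact Option.some.inj hhead
  have hsin : s ∈ pre := hpre (PS, s) (by rw [hhead]; rfl)
  have hchain := pesCpts_chain hcpts
  have projMem : ∀ (κ : K) (m : ℕ), m < cl.length →
      (∀ j, j + 1 ≤ m → (hj : j + 1 < cl.length) → cl[j].1 κ = cl[j+1].1 κ →
        (cl[j].2, cl[j+1].2) ∈ Rely κ) →
      ((cl.take (m+1)).map (fun p => (p.1 κ, p.2))) ∈
        Commit K ptran bot Γ (Guar κ) (Post κ) := by
    intro κ m hm H
    have hlen' : ((cl.take (m+1)).map
        (fun p : (K → EventSys Lbl Prog St) × St => (p.1 κ, p.2))).length = m + 1 := by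
      simp; omega
    have hhd : ((cl.take (m+1)).map
        (fun p : (K → EventSys Lbl Prog St) × St => (p.1 κ, p.2))).head? =
        some (PS κ, s) := by
      rw [List.head?_eq_getElem?, List.getElem?_eq_getElem (by rw [hlen']; omega)]
      simp [List.getElem_map, List.getElem_take, h0]
    have hc1 : cpts K ptran bot Γ
        ((cl.take (m+1)).map (fun p => (p.1 κ, p.2))) := by
      apply cpts_of_chain
      · intro hemp; rw [hemp] at hlen'; simp at hlen'
      · intro i hi
        rw [hlen'] at hi
        have hi' : i + 1 < cl.length := by omega
        rcases hchain i hi' with heq | ⟨⟨ξ', κ'⟩, hst⟩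
        · left; simp [List.getElem_map, List.getElem_take, heq]
        · by_cases hk : κ' = κ
          · subst hk
            right
            exact ⟨(ξ', κ'), by
              simpa [List.getElem_map, List.getElem_take] using (pesStep_inv hst).1⟩
          · left
            simp only [List.getElem_map, List.getElem_take]
            exact ((pesStep_inv hst).2 κ (fun he => hk he.symm)).symm
    have hA : ∀ c ∈ ((cl.take (m+1)).map
        (fun p : (K → EventSys Lbl Prog St) × St => (p.1 κ, p.2))).head?, c.2 ∈ Pre κ := by
      intro c hc
      rw [hhd] at hc
      simp at hc
      subst hc
      exact h3 κ hsin
    have hB : ∀ i : ℕ, (h : i + 1 < ((cl.take (m+1)).map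
        (fun p : (K → EventSys Lbl Prog St) × St => (p.1 κ, p.2))).length) →
        (((cl.take (m+1)).map (fun p => (p.1 κ, p.2))).get ⟨i, Nat.lt_of_succ_lt h⟩).1 =
          (((cl.take (m+1)).map (fun p => (p.1 κ, p.2))).get ⟨i + 1, h⟩).1 →
        ((((cl.take (m+1)).map (fun p => (p.1 κ, p.2))).get ⟨i, Nat.lt_of_succ_lt h⟩).2,
          (((cl.take (m+1)).map (fun p => (p.1 κ, p.2))).get ⟨i + 1, h⟩).2) ∈ Rely κ := by
      intro i hi heq
      rw [hlen'] at hi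
      have hi' : i + 1 < cl.length := by omega
      simp only [List.get_eq_getElem, List.getElem_map, List.getElem_take] at heq ⊢
      exact H i (by omega) hi' heq
    exact h1 κ s ⟨⟨hc1, hhd⟩, hA, hB⟩
  have key : ∀ i, (hi : i + 1 < cl.length) → ∀ ξ κ,
      pesStep ptran bot Γ cl[i] (ξ, κ) cl[i+1] → (cl[i].2, cl[i+1].2) ∈ Guar κ := by
    intro i
    induction i using Nat.strong_induction_on with
    | _ i IH =>
      intro hi ξ κ hstep
      have hK : ¬ cl[i].1 κ = cl[i+1].1 κ := esStep_ne hneq (pesStep_inv hstep).1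
      have H : ∀ j, j + 1 ≤ i + 1 → (hj : j + 1 < cl.length) →
          cl[j].1 κ = cl[j+1].1 κ → (cl[j].2, cl[j+1].2) ∈ Rely κ := by
        intro j hj hjlen heqj
        rcases hchain j hjlen with heq | ⟨⟨ξ'', κ''⟩, hst⟩
        · have := hrely j hjlen (by simpa [List.get_eq_getElem] using heq)
          exact h4 κ (by simpa [List.get_eq_getElem] using this)
        · by_cases hk : κ'' = κ
          · subst hk
            exact absurd heqj (esStep_ne hneq (pesStep_inv hst).1)
          · rcases Nat.lt_or_ge j i with hlt | hge
            · exact h2 κ'' κ hk (IH j hlt hjlen ξ'' κ'' hst)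
            · have : j = i := by omega
              subst this
              exact absurd heqj hK
      have hcom := projMem κ (i+1) hi H
      have hlen2 : ((cl.take (i+2)).map
          (fun p : (K → EventSys Lbl Prog St) × St => (p.1 κ, p.2))).length = i + 2 := by
        simp; omega
      have := hcom.1 i (by rw [hlen2]; omega)
        ⟨(ξ, κ), by
          simpa [List.get_eq_getElem, List.getElem_map, List.getElem_take] using
            (pesStep_inv hstep).1⟩
      simpa [List.get_eq_getElem, List.getElem_map, List.getElem_take] using this
  constructor
  · intro i hi hex
    obtain ⟨⟨ξ, κ⟩, hstep⟩ := hex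
    have := key i (by simpa using hi) ξ κ (by simpa [List.get_eq_getElem] using hstep)
    exact h5 κ (by simpa [List.get_eq_getElem] using this)
  · intro c hc hterm
    have hc' : c = cl[cl.length - 1]'(by omega) := by
      rw [List.getLast?_eq_getElem?, List.getElem?_eq_getElem (by omega)] at hc
      simpa using hc.symm
    apply h6
    rw [Set.mem_iInter]
    intro κ
    have H : ∀ j, j + 1 ≤ cl.length - 1 → (hj : j + 1 < cl.length) →
        cl[j].1 κ = cl[j+1].1 κ → (cl[j].2, cl[j+1].2) ∈ Rely κ := by
      intro j hj hjlen heqj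
      rcases hchain j hjlen with heq | ⟨⟨ξ'', κ''⟩, hst⟩
      · have := hrely j hjlen (by simpa [List.get_eq_getElem] using heq)
        exact h4 κ (by simpa [List.get_eq_getElem] using this)
      · by_cases hk : κ'' = κ
        · subst hk
          exact absurd heqj (esStep_ne hneq (pesStep_inv hst).1)
        · exact h2 κ'' κ hk (key j hjlen ξ'' κ'' hst)
    have hcom := projMem κ (cl.length - 1) (by omega) H
    rw [show cl.length - 1 + 1 = cl.length by omega, List.take_length] at hcom
    have hmem : (c.1 κ, c.2) ∈ (cl.map
        (fun p : (K → EventSys Lbl Prog St) × St => (p.1 κ, p.2))).getLast? := by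
      rw [List.getLast?_eq_getElem?, List.getElem?_eq_getElem (by simp; omega)]
      simp only [List.getElem_map, List.length_map, Option.mem_def, Option.some.injEq]
      rw [hc']
    exact hcom.2 (c.1 κ, c.2) hmem (hterm κ)
end

section
/- Invariant verification theorem: assume ⊥ has no program transitions and every program transition changes the program component. Let PS be a parallel event system, init ⊆ St, rely ⊆ St × St, and inv : St → Prop. If (1) PS satisfies its rely-guarantee specification, i.e. Σ ⊨pe PS sat [init, rely, guar, post]; (2) init ⊆ {s | inv s}; and (3) stable({s | inv s}, rely) and stable({s | inv s}, guar); then PS preserves the invariant inv from init under rely: every computation ϖ ∈ Ψ(Σ, PS) ∩ Assume(init, rely) satisfies inv(s_{ϖᵢ}) for every index i < len(ϖ). -/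
open PiCore in
/-- **Invariant verification theorem:** if a parallel event system satisfies its
rely-guarantee specification `[init, rely, guar, post]`, the invariant holds on
the initial states and is stable under both `rely` and `guar`, then every state
of every computation of the system from `init` under `rely` satisfies the
invariant. -/
theorem invariant_verification
    {Lbl Prog St Env K : Type} [DecidableEq K]
    (ptran : Env → Prog × St → Prog × St → Prop) (bot : Prog)
    (hbot : ∀ (Γ : Env) (s : St) (c : Prog × St), ¬ ptran Γ (bot, s) c)
    (hneq : ∀ (Γ : Env) (P : Prog) (s t : St), ¬ ptran Γ (P, s) (P, t))
    (Γ : Env) (PS : K → EventSys Lbl Prog St)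
    (init : Set St) (rely guar : Set (St × St)) (post : Set St)
    (inv : St → Prop)
    (h1 : pesValid ptran bot Γ PS init rely guar post)
    (h2 : init ⊆ {s | inv s})
    (h3 : stable {s | inv s} rely)
    (h4 : stable {s | inv s} guar) :
    ∀ cl : List ((K → EventSys Lbl Prog St) × St),
      pesCpts ptran bot Γ cl →
      (∀ c ∈ cl.head?, c.1 = PS) →
      cl ∈ pesAssume init rely →
      ∀ i : ℕ, (h : i < cl.length) → inv (cl.get ⟨i, h⟩).2 := by
  -- helper: consecutive elements are related by env or step
  have key : ∀ cl : List ((K → EventSys Lbl Prog St) × St),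
      pesCpts ptran bot Γ cl →
      ∀ i : ℕ, (h : i + 1 < cl.length) →
        (cl.get ⟨i, Nat.lt_of_succ_lt h⟩).1 = (cl.get ⟨i + 1, h⟩).1 ∨
        ∃ δ : TranKind Lbl × K,
          pesStep ptran bot Γ (cl.get ⟨i, Nat.lt_of_succ_lt h⟩) δ (cl.get ⟨i + 1, h⟩) := by
    intro cl hc
    induction hc with
    | one => intro i h; simp at h
    | env h ih =>
      intro i hi
      cases i with
      | zero => left; rfl
      | succ j =>
        have := ih j (by simpa using Nat.lt_of_succ_lt_succ hi)
        simpa using this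
    | act h1 h2 ih =>
      intro i hi
      cases i with
      | zero => right; exact ⟨_, h1⟩
      | succ j =>
        have := ih j (by simpa using Nat.lt_of_succ_lt_succ hi)
        simpa using this
  intro cl hc hhead hassume
  -- cl is nonempty, head is (PS, s)
  have hne : cl ≠ [] := by cases hc <;> simp
  obtain ⟨⟨PS0, s0⟩, tl, rfl⟩ : ∃ a tl, cl = a :: tl := by
    cases cl with
    | nil => exact absurd rfl hne
    | cons a tl => exact ⟨a, tl, rfl⟩
  have hPS0 : PS0 = PS := hhead (PS0, s0) rfl
  set cl := (PS0, s0) :: tl with hcl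
  have hheadsome : cl.head? = some (PS, s0) := by rw [hcl, hPS0]; rfl
  have hcommit : cl ∈ pesCommit ptran bot Γ guar post :=
    h1 s0 ⟨⟨hc, hheadsome⟩, hassume⟩
  have hinit : s0 ∈ init := hassume.1 (PS0, s0) rfl
  intro i
  induction i with
  | zero =>
    intro h
    exact h2 hinit
  | succ j ih =>
    intro h
    have hj : j < cl.length := Nat.lt_of_succ_lt h
    have hinvj : inv (cl.get ⟨j, hj⟩).2 := ih hj
    rcases key cl hc j h with heq | hstep
    · exact h3 _ _ hinvj (hassume.2 j h heq)
    · exact h4 _ _ hinvj (hcommit.1 j h hstep)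
end
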